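/- arXiv:2003.09111 — 4 statements merged into one kernel-verified Lean document; each statement's English description precedes it below -/
import Mathlib

section
/- Let C ≥ 1, T > 0 and B ≥ 0 be reals, let w : [0,T] → [0,∞) be integrable, and set A = ∫₀ᵀ w(t) dt and H = (B + 8C³B³A)·exp(4C³B²A). Assume 12C³H²·A ≤ log 2. Let F : ℕ → ([0,T] → [0,∞)) be a sequence of continuous functions such that F₀(t) ≤ B for all t ∈ [0,T], and such that for every k ≥ 0 and every t ∈ [0,T], F_{k+1}(t) ≤ C·exp(C·∫₀ᵗ w(s)·F_k(s)² ds)·(B + ∫₀ᵗ w(s)·F_k(s)³ ds). Then F_k(t) ≤ 2CH for every k ≥ 1 and every t ∈ [0,T]. -/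
/-!
If `F_k ≤ K` on `[0,T]`, the recursion gives `F_{k+1} ≤ C·exp(C K² A)·(B + K³ A)`. For
`K = 2CH` and `x = 4C³H²A` this bound is `C·eˣ·(B + 2Hx) ≤ C·H·e³ˣ` (using `B ≤ H` and
`1 + 2x ≤ e²ˣ`), which is at most `2CH` as soon as `3x ≤ log 2`. Since `F₀ ≤ B ≤ H ≤ 2CH`,
the bound `2CH` propagates by induction to every `F_k`.
-/

open MeasureTheory intervalIntegral Set

lemma intervalIntegral_mul_le_mul_integral {a b t K : ℝ} {w f : ℝ → ℝ}
    (hw : ∀ s ∈ Icc a b, 0 ≤ w s) (hwint : IntegrableOn w (Icc a b))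
    (hf : AEStronglyMeasurable f (volume.restrict (Icc a b)))
    (hf0 : ∀ s ∈ Icc a b, 0 ≤ f s) (hfK : ∀ s ∈ Icc a b, f s ≤ K) (ht : t ∈ Icc a b) :
    ∫ s in a..t, w s * f s ≤ K * ∫ s in a..b, w s := by
  obtain ⟨hat, htb⟩ := ht
  have hab : a ≤ b := hat.trans htb
  have hK0 : 0 ≤ K := (hf0 a ⟨le_rfl, hab⟩).trans (hfK a ⟨le_rfl, hab⟩)
  have hsub : Icc a t ⊆ Icc a b := Icc_subset_Icc_right htb
  have hwf : IntegrableOn (fun s => w s * f s) (Icc a b) := by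
    refine hwint.mul_bdd hf (c := K) ?_
    refine (ae_restrict_iff' measurableSet_Icc).2 (.of_forall fun s hs => ?_)
    rw [Real.norm_eq_abs, abs_of_nonneg (hf0 s hs)]
    exact hfK s hs
  calc ∫ s in a..t, w s * f s ≤ ∫ s in a..t, K * w s := by
        refine integral_mono_on hat ((intervalIntegrable_iff_integrableOn_Ioc_of_le hat).2
          (hwf.mono_set (Ioc_subset_Icc_self.trans hsub)))
          ((intervalIntegrable_iff_integrableOn_Ioc_of_le hat).2
          ((hwint.mono_set (Ioc_subset_Icc_self.trans hsub)).const_mul K)) fun s hs => ?_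
        rw [mul_comm K]
        exact mul_le_mul_of_nonneg_left (hfK s (hsub hs)) (hw s (hsub hs))
    _ = K * ∫ s in a..t, w s := integral_const_mul _ _
    _ ≤ K * ∫ s in a..b, w s := by
        refine mul_le_mul_of_nonneg_left (integral_mono_interval le_rfl hat htb ?_
          ((intervalIntegrable_iff_integrableOn_Ioc_of_le hab).2
            (hwint.mono_set Ioc_subset_Icc_self))) hK0
        exact (ae_restrict_iff' measurableSet_Ioc).2
          (.of_forall fun s hs => hw s (Ioc_subset_Icc_self hs))

lemma mul_exp_integral_sq_mul_add_integral_cube_le {a b t C B K : ℝ} {w f : ℝ → ℝ}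
    (hC : 0 ≤ C) (hB : 0 ≤ B)
    (hw : ∀ s ∈ Icc a b, 0 ≤ w s) (hwint : IntegrableOn w (Icc a b))
    (hf : ContinuousOn f (Icc a b))
    (hf0 : ∀ s ∈ Icc a b, 0 ≤ f s) (hfK : ∀ s ∈ Icc a b, f s ≤ K) (ht : t ∈ Icc a b) :
    C * Real.exp (C * ∫ s in a..t, w s * f s ^ 2) * (B + ∫ s in a..t, w s * f s ^ 3)
      ≤ C * Real.exp (C * (K ^ 2 * ∫ s in a..b, w s)) * (B + K ^ 3 * ∫ s in a..b, w s) := by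
  have hab : a ≤ b := ht.1.trans ht.2
  have hK0 : 0 ≤ K := (hf0 a ⟨le_rfl, hab⟩).trans (hfK a ⟨le_rfl, hab⟩)
  have hpow : ∀ n : ℕ, ∫ s in a..t, w s * f s ^ n ≤ K ^ n * ∫ s in a..b, w s := fun n =>
    intervalIntegral_mul_le_mul_integral hw hwint
      ((hf.pow n).aestronglyMeasurable measurableSet_Icc) (fun s hs => pow_nonneg (hf0 s hs) n)
      (fun s hs => pow_le_pow_left₀ (hf0 s hs) (hfK s hs) n) ht
  have hA0 : 0 ≤ ∫ s in a..b, w s := integral_nonneg hab hw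
  refine mul_le_mul_of_nonneg ?_ ?_ (by positivity) (by positivity)
  · gcongr
    exact hpow 2
  · gcongr
    exact hpow 3

lemma exp_mul_add_le_two_mul {B H x : ℝ} (hH : 0 ≤ H) (hBH : B ≤ H)
    (hx : 3 * x ≤ Real.log 2) :
    Real.exp x * (B + 2 * H * x) ≤ 2 * H := by
  calc Real.exp x * (B + 2 * H * x) ≤ Real.exp x * (H * Real.exp (2 * x)) := by
        gcongr
        nlinarith [Real.add_one_le_exp (2 * x)]
    _ = H * Real.exp (3 * x) := by rw [mul_left_comm, ← Real.exp_add]; ring_nf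
    _ ≤ H * 2 := by
        gcongr
        exact (Real.exp_le_exp.2 hx).trans_eq (Real.exp_log two_pos)
    _ = 2 * H := mul_comm _ _

/-- the uniform-bound iteration of Section 3.2, inequalities (3.9)–(3.14):
with `A = ∫₀ᵀ w`, `H = (B + 8C³B³A)exp(4C³B²A)` and `12C³H²A ≤ log 2`, any sequence of
continuous nonnegative functions with `F₀ ≤ B` satisfying the iterative inequality
`F_{k+1}(t) ≤ C·exp(C∫₀ᵗ w F_k²)·(B + ∫₀ᵗ w F_k³)` obeys `F_k ≤ 2CH` for all `k ≥ 1`. -/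
theorem statement4 (C T B : ℝ) (hC : 1 ≤ C) (hT : 0 < T) (hB : 0 ≤ B)
    (w : ℝ → ℝ) (hw : ∀ t ∈ Icc (0:ℝ) T, 0 ≤ w t)
    (hwint : IntegrableOn w (Icc (0:ℝ) T))
    (A H : ℝ)
    (hA : A = ∫ t in (0:ℝ)..T, w t)
    (hH : H = (B + 8 * C ^ 3 * B ^ 3 * A) * Real.exp (4 * C ^ 3 * B ^ 2 * A))
    (hsmall : 12 * C ^ 3 * H ^ 2 * A ≤ Real.log 2)
    (F : ℕ → ℝ → ℝ)
    (hFcont : ∀ k, ContinuousOn (F k) (Icc (0:ℝ) T))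
    (hFnonneg : ∀ k, ∀ t ∈ Icc (0:ℝ) T, 0 ≤ F k t)
    (hF0 : ∀ t ∈ Icc (0:ℝ) T, F 0 t ≤ B)
    (hrec : ∀ k, ∀ t ∈ Icc (0:ℝ) T,
      F (k + 1) t ≤ C * Real.exp (C * ∫ s in (0:ℝ)..t, w s * (F k s) ^ 2)
        * (B + ∫ s in (0:ℝ)..t, w s * (F k s) ^ 3)) :
    ∀ k, 1 ≤ k → ∀ t ∈ Icc (0:ℝ) T, F k t ≤ 2 * C * H := by
  have hC0 : 0 ≤ C := zero_le_one.trans hC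
  have hA0 : 0 ≤ A := hA ▸ integral_nonneg hT.le hw
  have hBH : B ≤ H := by
    rw [hH]
    calc B ≤ B + 8 * C ^ 3 * B ^ 3 * A := le_add_of_nonneg_right (by positivity)
      _ ≤ _ := le_mul_of_one_le_right (by positivity) (Real.one_le_exp (by positivity))
  have hH0 : 0 ≤ H := hB.trans hBH
  have hbound : ∀ k, ∀ t ∈ Icc (0:ℝ) T, F k t ≤ 2 * C * H := by
    intro k
    induction k with
    | zero => exact fun t ht => (hF0 t ht).trans (by nlinarith)
    | succ k ih =>
      intro t ht
      calc F (k + 1) t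
          ≤ C * Real.exp (C * ((2 * C * H) ^ 2 * A)) * (B + (2 * C * H) ^ 3 * A) := hA ▸
            (hrec k t ht).trans (mul_exp_integral_sq_mul_add_integral_cube_le hC0 hB hw hwint
              (hFcont k) (hFnonneg k) ih ht)
        _ = C * (Real.exp (4 * C ^ 3 * H ^ 2 * A) * (B + 2 * H * (4 * C ^ 3 * H ^ 2 * A))) := by
            ring
        _ ≤ C * (2 * H) := mul_le_mul_of_nonneg_left
            (exp_mul_add_le_two_mul hH0 hBH (le_of_eq_of_le (by ring) hsmall)) hC0
        _ = 2 * C * H := by ring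
  exact fun k _ => hbound k
end

section
/- For every real K > 0 and every real x with 0 < x ≤ 1, x·log(e + K/x) ≤ log(e + K)·(1 − log x). -/
/-! Since `x ≤ 1`, we have `e + K/x ≤ (e + K)/x`, so `x log(e + K/x) ≤ x (L - log x)` with
`L = log(e + K) ≥ 1`; the last expression is at most `L (1 - log x)` because `x ≤ 1 ≤ L`
and `log x ≤ 0`. -/

open Real

lemma log_add_div_le_log_add_sub_log {a K x : ℝ} (ha : 0 ≤ a) (hK : 0 ≤ K) (haK : 0 < a + K)
    (hx0 : 0 < x) (hx1 : x ≤ 1) : log (a + K / x) ≤ log (a + K) - log x := by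
  have hKx : K ≤ K / x := le_div_self hK hx0 hx1
  have hax : a ≤ a / x := le_div_self ha hx0 hx1
  rw [← log_div haK.ne' hx0.ne', add_div]
  exact log_le_log (by linarith) (by linarith)

lemma mul_sub_log_le_mul_one_sub_log {L x : ℝ} (hL : 1 ≤ L) (hx0 : 0 < x) (hx1 : x ≤ 1) :
    x * (L - log x) ≤ L * (1 - log x) := by
  have hlog : log x ≤ 0 := log_nonpos hx0.le hx1
  nlinarith [mul_nonneg (sub_nonneg.2 hx1) (by linarith : (0 : ℝ) ≤ L),
    mul_nonneg (neg_nonneg.2 hlog) (by linarith : (0 : ℝ) ≤ L - x)]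

lemma one_le_log_exp_one_add {K : ℝ} (hK : 0 ≤ K) : 1 ≤ log (exp 1 + K) := by
  rw [le_log_iff_exp_le (by positivity)]
  linarith

/-- for `K > 0` and `0 < x ≤ 1`,
`x·log(e + K/x) ≤ log(e + K)·(1 − log x)`. -/
theorem statement7 (K x : ℝ) (hK : 0 < K) (hx0 : 0 < x) (hx1 : x ≤ 1) :
    x * Real.log (Real.exp 1 + K / x) ≤ Real.log (Real.exp 1 + K) * (1 - Real.log x) :=
  calc x * log (exp 1 + K / x)
      ≤ x * (log (exp 1 + K) - log x) :=
        mul_le_mul_of_nonneg_left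
          (log_add_div_le_log_add_sub_log (exp_pos 1).le hK.le (by positivity) hx0 hx1) hx0.le
    _ ≤ log (exp 1 + K) * (1 - log x) :=
        mul_sub_log_le_mul_one_sub_log (one_le_log_exp_one_add hK.le) hx0 hx1
end

section
/- For every real K > 0 and all reals a, b with 0 < a ≤ b ≤ K, ∫ₐᵇ dr / (r·log(e + K/r)) ≥ (1/log(e+1))·log( (1 − log(a/K)) / (1 − log(b/K)) ). (Note 0 < a/K ≤ b/K ≤ 1, so both 1 − log(a/K) and 1 − log(b/K) are ≥ 1 and the right-hand side is ≥ 0.) -/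
/-!
On `0 < r ≤ K` we have `e + K/r ≤ (e + 1)·K/r`, and since `log (e + 1) ≥ 1` this gives
`log (e + K/r) ≤ log (e + 1)·(1 - log (r/K))`. Hence the integrand dominates
`1 / (log (e + 1)·r·(1 - log (r/K)))`, whose antiderivative is
`-log (1 - log (r/K)) / log (e + 1)`.
-/

open Real Set intervalIntegral

lemma one_lt_log_exp_one_add_one : 1 < log (exp 1 + 1) := by
  calc (1 : ℝ) = log (exp 1) := (log_exp 1).symm
    _ < log (exp 1 + 1) := log_lt_log (exp_pos 1) (lt_add_one _)

lemma one_lt_exp_one_add {x : ℝ} (hx : 0 ≤ x) : 1 < exp 1 + x := by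
  linarith [one_lt_exp_iff.2 one_pos]

lemma log_exp_one_add_le {x : ℝ} (hx : 1 ≤ x) :
    log (exp 1 + x) ≤ log (exp 1 + 1) * (1 + log x) := by
  have hle : exp 1 + x ≤ (exp 1 + 1) * x := by nlinarith [exp_pos 1]
  have hlog_x : 0 ≤ log x := log_nonneg hx
  calc log (exp 1 + x) ≤ log ((exp 1 + 1) * x) := log_le_log (by positivity) hle
    _ = log (exp 1 + 1) + log x := log_mul (by positivity) (by linarith)
    _ ≤ log (exp 1 + 1) * (1 + log x) := by nlinarith [one_lt_log_exp_one_add_one]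

lemma one_le_one_sub_log_div {r K : ℝ} (hr : 0 < r) (hrK : r ≤ K) : 1 ≤ 1 - log (r / K) := by
  have : log (r / K) ≤ 0 :=
    log_nonpos (div_pos hr (hr.trans_le hrK)).le (div_le_one_of_le₀ hrK (hr.le.trans hrK))
  linarith

lemma log_exp_one_add_div_le {r K : ℝ} (hr : 0 < r) (hrK : r ≤ K) :
    log (exp 1 + K / r) ≤ log (exp 1 + 1) * (1 - log (r / K)) := by
  have hlog : log (r / K) = -log (K / r) := by rw [← log_inv, inv_div]
  rw [hlog, sub_neg_eq_add]
  exact log_exp_one_add_le ((one_le_div hr).2 hrK)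

lemma inv_mul_one_sub_log_div_le {r K : ℝ} (hr : 0 < r) (hrK : r ≤ K) :
    (log (exp 1 + 1))⁻¹ * (r * (1 - log (r / K)))⁻¹ ≤ 1 / (r * log (exp 1 + K / r)) := by
  have hlog_pos : 0 < log (exp 1 + K / r) :=
    log_pos (one_lt_exp_one_add (div_pos (hr.trans_le hrK) hr).le)
  rw [← mul_inv, one_div]
  refine inv_anti₀ (by positivity) ?_
  calc r * log (exp 1 + K / r) ≤ r * (log (exp 1 + 1) * (1 - log (r / K))) :=
        mul_le_mul_of_nonneg_left (log_exp_one_add_div_le hr hrK) hr.le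
    _ = log (exp 1 + 1) * (r * (1 - log (r / K))) := by ring

lemma continuousOn_one_div_mul_log_exp_one_add_div {K : ℝ} (hK : 0 ≤ K) :
    ContinuousOn (fun r => 1 / (r * log (exp 1 + K / r))) (Ioi 0) := by
  have hgt : ∀ r ∈ Ioi (0 : ℝ), 1 < exp 1 + K / r := fun r hr =>
    one_lt_exp_one_add (div_nonneg hK (le_of_lt hr))
  refine continuousOn_const.div (continuousOn_id.mul (ContinuousOn.log ?_ ?_)) ?_
  · exact continuousOn_const.add (continuousOn_const.div continuousOn_id fun r hr => ne_of_gt hr)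
  · exact fun r hr => by linarith [hgt r hr]
  · exact fun r hr => mul_ne_zero (ne_of_gt hr) (log_pos (hgt r hr)).ne'

lemma continuousOn_inv_mul_one_sub_log_div {K : ℝ} (hK : 0 < K) :
    ContinuousOn (fun r => (r * (1 - log (r / K)))⁻¹) (Ioc 0 K) := by
  refine ContinuousOn.inv₀ ?_ fun r hr => ?_
  · exact continuousOn_id.mul (continuousOn_const.sub
      ((continuousOn_id.div_const K).log fun r hr => div_ne_zero (ne_of_gt hr.1) hK.ne'))
  · have := one_le_one_sub_log_div hr.1 hr.2
    exact mul_ne_zero (ne_of_gt hr.1) (by linarith)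

lemma hasDerivAt_neg_log_one_sub_log_div {r K : ℝ} (hr : r ≠ 0) (hK : K ≠ 0)
    (hlog : 1 - log (r / K) ≠ 0) :
    HasDerivAt (fun x => -log (1 - log (x / K))) (r * (1 - log (r / K)))⁻¹ r := by
  have hdiv : HasDerivAt (fun x => log (x / K)) r⁻¹ r := by
    convert ((hasDerivAt_id' r).div_const K).log (div_ne_zero hr hK) using 1
    field_simp
  rw [show (r * (1 - log (r / K)))⁻¹ = -(-r⁻¹ / (1 - log (r / K))) by field_simp]
  exact ((hdiv.const_sub 1).log hlog).neg

lemma integral_inv_mul_one_sub_log_div {a b K : ℝ} (ha : 0 < a) (haK : a ≤ K) (hb : 0 < b)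
    (hbK : b ≤ K) :
    ∫ r in a..b, (r * (1 - log (r / K)))⁻¹
      = log (1 - log (a / K)) - log (1 - log (b / K)) := by
  have hsub : uIcc a b ⊆ Ioc 0 K := ordConnected_Ioc.uIcc_subset ⟨ha, haK⟩ ⟨hb, hbK⟩
  have hderiv : ∀ r ∈ uIcc a b,
      HasDerivAt (fun x => -log (1 - log (x / K))) (r * (1 - log (r / K)))⁻¹ r := fun r hr => by
    obtain ⟨hr, hrK⟩ := hsub hr
    have := one_le_one_sub_log_div hr hrK
    exact hasDerivAt_neg_log_one_sub_log_div hr.ne' (hr.trans_le hrK).ne' (by linarith)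
  have hcont := ((continuousOn_inv_mul_one_sub_log_div (ha.trans_le haK)).mono hsub)
  rw [integral_eq_sub_of_hasDerivAt hderiv hcont.intervalIntegrable]
  ring

theorem statement9_general (K a b : ℝ) (ha : 0 < a) (hab : a ≤ b) (hbK : b ≤ K) :
    (1 / Real.log (Real.exp 1 + 1)) *
        Real.log ((1 - Real.log (a / K)) / (1 - Real.log (b / K)))
      ≤ ∫ r in a..b, 1 / (r * Real.log (Real.exp 1 + K / r)) := by
  have hK : 0 < K := ha.trans_le (hab.trans hbK)
  have hsub : Icc a b ⊆ Ioc 0 K := fun r hr => ⟨ha.trans_le hr.1, hr.2.trans hbK⟩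
  have hA := one_pos.trans_le (one_le_one_sub_log_div ha (hab.trans hbK))
  have hB := one_pos.trans_le (one_le_one_sub_log_div (ha.trans_le hab) hbK)
  calc 1 / log (exp 1 + 1) * log ((1 - log (a / K)) / (1 - log (b / K)))
      = ∫ r in a..b, (log (exp 1 + 1))⁻¹ * (r * (1 - log (r / K)))⁻¹ := by
        rw [integral_const_mul,
          integral_inv_mul_one_sub_log_div ha (hab.trans hbK) (ha.trans_le hab) hbK,
          log_div hA.ne' hB.ne', one_div]
    _ ≤ ∫ r in a..b, 1 / (r * log (exp 1 + K / r)) := by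
      refine integral_mono_on hab ?_ ?_ fun r hr =>
        inv_mul_one_sub_log_div_le (hsub hr).1 (hsub hr).2
      · exact (((continuousOn_inv_mul_one_sub_log_div hK).mono hsub).intervalIntegrable_of_Icc
          hab).const_mul _
      · exact ((continuousOn_one_div_mul_log_exp_one_add_div hK.le).mono
          fun r hr => (hsub hr).1).intervalIntegrable_of_Icc hab

/-- lower bound for the Osgood integral, proof of Lemma 4.1: for `K > 0`
and `0 < a ≤ b ≤ K`,
`∫ₐᵇ dr/(r·log(e + K/r)) ≥ (1/log(e+1))·log((1 − log(a/K))/(1 − log(b/K)))`. -/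
theorem statement9 (K a b : ℝ) (hK : 0 < K) (ha : 0 < a) (hab : a ≤ b) (hbK : b ≤ K) :
    (1 / Real.log (Real.exp 1 + 1)) *
        Real.log ((1 - Real.log (a / K)) / (1 - Real.log (b / K)))
      ≤ ∫ r in a..b, 1 / (r * Real.log (Real.exp 1 + K / r)) :=
  statement9_general K a b ha hab hbK
end

section
/- There is an absolute constant C > 0 with the following property: for every s ∈ ℝ, every δ > 0, every sequence a : ℕ → [0,∞), and all reals M, M' with 0 < M ≤ M', if 2^{q·s}·a_q ≤ M and 2^{q·(s+δ)}·a_q ≤ M' for every q ∈ ℕ, then Σ_{q∈ℕ} 2^{q·s}·a_q ≤ C·((1+δ)/δ)·M·(1 + log(M'/M)). -/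
/-!
Put `b q = 2 ^ (q s) a q`. The hypotheses say `b q ≤ M` and `b q ≤ M' e^{-t q}` with
`t = δ log 2`. Bounding the first `N = ⌈log (M' / M) / t⌉` terms by `M` and the rest by the
geometric tail, which starts below `M`, gives `N M + M / (1 - e^{-t})`; finally
`1 / (1 - e^{-t}) ≤ 1 + 1 / t` and `log 2 > 1 / 2`.
-/

open Real

theorem tsum_le_of_le_const_of_le_geometric {b : ℕ → ℝ} {M K r : ℝ} (hb : ∀ q, 0 ≤ b q)
    (hr₀ : 0 ≤ r) (hr₁ : r < 1) (hM : ∀ q, b q ≤ M) (hK : ∀ q, b q ≤ K * r ^ q) (N : ℕ) :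
    ∑' q, b q ≤ N * M + K * r ^ N / (1 - r) := by
  have hgeom : Summable fun q => K * r ^ q := (summable_geometric_of_lt_one hr₀ hr₁).mul_left K
  have hsum : Summable b := .of_nonneg_of_le hb hK hgeom
  have hhead : ∑ q ∈ Finset.range N, b q ≤ N * M := by
    simpa using Finset.sum_le_card_nsmul (Finset.range N) b M fun q _ => hM q
  have htail : ∑' q, b (q + N) ≤ K * r ^ N / (1 - r) :=
    calc ∑' q, b (q + N) ≤ ∑' q, K * r ^ N * r ^ q :=
          (hsum.comp_injective (add_left_injective N)).tsum_le_tsum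
            (fun q => (hK _).trans_eq (by ring)) (hgeom.mul_left (r ^ N) |>.congr fun q => by ring)
      _ = K * r ^ N / (1 - r) := by
          rw [tsum_mul_left, tsum_geometric_of_lt_one hr₀ hr₁, div_eq_mul_inv]
  rw [← hsum.sum_add_tsum_nat_add N]
  exact add_le_add hhead htail

theorem inv_one_sub_exp_neg_le {t : ℝ} (ht : 0 < t) : (1 - exp (-t))⁻¹ ≤ 1 + t⁻¹ := by
  have hexp : exp (-t) ≤ (1 + t)⁻¹ := by
    rw [exp_neg]
    exact inv_anti₀ (by linarith) (by linarith [add_one_le_exp t])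
  have hlow : t / (1 + t) ≤ 1 - exp (-t) := by
    calc t / (1 + t) = 1 - (1 + t)⁻¹ := by field_simp; ring
      _ ≤ 1 - exp (-t) := by linarith
  calc (1 - exp (-t))⁻¹ ≤ (t / (1 + t))⁻¹ := inv_anti₀ (by positivity) hlow
    _ = 1 + t⁻¹ := by field_simp; ring

theorem tsum_le_of_le_const_of_le_exp_decay {b : ℕ → ℝ} {M M' t : ℝ} (hb : ∀ q, 0 ≤ b q)
    (ht : 0 < t) (hM₀ : 0 < M) (hMM' : M ≤ M') (hM : ∀ q, b q ≤ M)
    (hM' : ∀ q, b q ≤ M' * exp (-t) ^ q) :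
    ∑' q, b q ≤ M * ((log (M' / M) + 1) / t + 2) := by
  set L := log (M' / M)
  have hL : 0 ≤ L := log_nonneg ((one_le_div hM₀).mpr hMM')
  set N := ⌈L / t⌉₊
  have hN : (N : ℝ) < L / t + 1 := Nat.ceil_lt_add_one (by positivity)
  have hcut : M' * exp (-t) ^ N ≤ M := by
    have : exp (-t) ^ N ≤ exp (-L) := by
      rw [← exp_nat_mul, exp_le_exp]
      have := (div_le_iff₀ ht).mp (Nat.le_ceil (L / t))
      linarith
    calc M' * exp (-t) ^ N ≤ M' * exp (-L) := by gcongr; linarith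
      _ = M := by
          have : M' ≠ 0 := (hM₀.trans_le hMM').ne'
          rw [exp_neg, exp_log (div_pos (hM₀.trans_le hMM') hM₀)]
          field_simp
  calc ∑' q, b q ≤ N * M + M' * exp (-t) ^ N / (1 - exp (-t)) :=
        tsum_le_of_le_const_of_le_geometric hb (exp_pos _).le (exp_lt_one_iff.mpr (by linarith))
          hM hM' N
    _ ≤ (L / t + 1) * M + M * (1 + t⁻¹) := by
        rw [div_eq_mul_inv]
        gcongr
        · exact inv_nonneg.mpr (by linarith [exp_lt_one_iff.mpr (neg_lt_zero.mpr ht)])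
        · exact inv_one_sub_exp_neg_le ht
    _ = M * ((L + 1) / t + 2) := by field_simp; ring

theorem two_rpow_mul_le_exp_decay {s δ a M' : ℝ} (q : ℕ)
    (h : (2 : ℝ) ^ ((q : ℝ) * (s + δ)) * a ≤ M') :
    (2 : ℝ) ^ ((q : ℝ) * s) * a ≤ M' * exp (-(δ * log 2)) ^ q := by
  have hsplit : (2 : ℝ) ^ ((q : ℝ) * s) = exp (-(δ * log 2)) ^ q * 2 ^ ((q : ℝ) * (s + δ)) := by
    rw [rpow_def_of_pos two_pos, rpow_def_of_pos two_pos, ← exp_nat_mul, ← exp_add]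
    ring_nf
  rw [hsplit, mul_assoc, mul_comm M']
  exact mul_le_mul_of_nonneg_left h (by positivity)

theorem add_one_div_mul_log_two_add_two_le {δ L : ℝ} (hδ : 0 < δ) (hL : 0 ≤ L) :
    (L + 1) / (δ * log 2) + 2 ≤ 4 * ((1 + δ) / δ) * (1 + L) := by
  have hlog : 1 / 2 < log 2 := by linarith [log_two_gt_d9]
  have h₁ : (L + 1) / (δ * log 2) ≤ 2 * (L + 1) / δ := by
    rw [div_le_div_iff₀ (by positivity) hδ]
    nlinarith [mul_pos hδ (by linarith : (0 : ℝ) < L + 1)]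
  have h₂ : 2 * (L + 1) / δ + 2 ≤ 4 * ((1 + δ) / δ) * (1 + L) := by
    rw [add_div, div_self hδ.ne', one_div, div_eq_mul_inv]
    nlinarith [mul_nonneg (inv_pos.mpr hδ).le hL, inv_pos.mpr hδ]
  linarith

/-- sequence-level logarithmic interpolation inequality, Lemma 3.3:
there is an absolute constant `C > 0` such that whenever `2^{qs}a_q ≤ M` and
`2^{q(s+δ)}a_q ≤ M'` for all `q`, with `0 < M ≤ M'` and `δ > 0`, one has
`Σ_q 2^{qs}a_q ≤ C((1+δ)/δ)·M·(1 + log(M'/M))`. -/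
theorem statement15 :
    ∃ C : ℝ, 0 < C ∧
      ∀ (s δ : ℝ), 0 < δ →
      ∀ (a : ℕ → ℝ), (∀ q, 0 ≤ a q) →
      ∀ (M M' : ℝ), 0 < M → M ≤ M' →
      (∀ q : ℕ, (2 : ℝ) ^ ((q : ℝ) * s) * a q ≤ M) →
      (∀ q : ℕ, (2 : ℝ) ^ ((q : ℝ) * (s + δ)) * a q ≤ M') →
      (∑' q : ℕ, (2 : ℝ) ^ ((q : ℝ) * s) * a q)
        ≤ C * ((1 + δ) / δ) * M * (1 + Real.log (M' / M)) := by
  refine ⟨4, by norm_num, fun s δ hδ a ha M M' hM₀ hMM' hM hM' => ?_⟩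
  have hL : 0 ≤ log (M' / M) := log_nonneg ((one_le_div hM₀).mpr hMM')
  calc ∑' q : ℕ, (2 : ℝ) ^ ((q : ℝ) * s) * a q
      ≤ M * ((log (M' / M) + 1) / (δ * log 2) + 2) :=
        tsum_le_of_le_const_of_le_exp_decay (fun q => mul_nonneg (by positivity) (ha q)) (by positivity) hM₀ hMM' hM
          fun q => two_rpow_mul_le_exp_decay q (hM' q)
    _ ≤ M * (4 * ((1 + δ) / δ) * (1 + log (M' / M))) :=
        mul_le_mul_of_nonneg_left (add_one_div_mul_log_two_add_two_le hδ hL) hM₀.le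
    _ = 4 * ((1 + δ) / δ) * M * (1 + log (M' / M)) := by ring
end
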